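/- arXiv:2209.13063 — 7 statements merged into one kernel-verified Lean document; each statement's English description precedes it below -/
import Mathlib

section
/- A finite simple graph G has a perfect matching if and only if the determinant of its Tutte matrix, viewed as a polynomial in the variables x_{uv}, is not identically zero. -/
open MvPolynomial

/-- The Tutte matrix of a simple graph `G` on `Fin n`: the skew-symmetric matrix with
`T u v = x_{uv}` if `u > v` and `G.Adj u v`, `T u v = -x_{uv}` if `u < v` and `G.Adj u v`,
and `0` otherwise, over the polynomial ring with one indeterminate per unordered pair. -/
noncomputable def tutteMatrix {n : ℕ} (G : SimpleGraph (Fin n)) [DecidableRel G.Adj] :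
    Matrix (Fin n) (Fin n) (MvPolynomial (Sym2 (Fin n)) ℚ) :=
  Matrix.of fun u v =>
    if G.Adj u v then (if v < u then X s(u, v) else -X s(u, v)) else 0

theorem Equiv.Perm.apply_inv_self {α : Type*} (f : Equiv.Perm α) (x : α) : f (f⁻¹ x) = x :=
  Equiv.apply_symm_apply f x

theorem Equiv.Perm.inv_apply_self {α : Type*} (f : Equiv.Perm α) (x : α) : f⁻¹ (f x) = x :=
  Equiv.symm_apply_apply f x

theorem Equiv.Perm.sameCycle_inv_apply_right {α : Type*} {f : Equiv.Perm α} {x y : α} :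
    f.SameCycle x (f⁻¹ y) ↔ f.SameCycle x y :=
  Equiv.Perm.sameCycle_symm_apply_right

namespace TutteAux

open Equiv Equiv.Perm Finset

variable {n : ℕ}


open Equiv Equiv.Perm Finset

variable {n : ℕ}

lemma tutte_skew (G : SimpleGraph (Fin n)) [DecidableRel G.Adj] (u v : Fin n) :
    tutteMatrix G u v = - tutteMatrix G v u := by
  simp only [tutteMatrix, Matrix.of_apply]
  by_cases h : G.Adj u v
  · have h' : G.Adj v u := h.symm
    have hne : u ≠ v := h.ne
    rw [if_pos h, if_pos h', Sym2.eq_swap]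
    rcases lt_or_gt_of_ne hne with h1 | h1
    · rw [if_neg (asymm h1), if_pos h1]
    · rw [if_pos h1, if_neg (asymm h1), neg_neg]
  · have h' : ¬ G.Adj v u := fun h' => h h'.symm
    rw [if_neg h, if_neg h', neg_zero]

lemma det_ne_zero_of_pm (G : SimpleGraph (Fin n)) [DecidableRel G.Adj] (M : G.Subgraph)
    (hM : M.IsPerfectMatching) : (tutteMatrix G).det ≠ 0 := by
  classical
  set val : Sym2 (Fin n) → ℚ := fun e => if e ∈ M.edgeSet then 1 else 0 with hval
  set φ : MvPolynomial (Sym2 (Fin n)) ℚ →ₐ[ℚ] ℚ := aeval val with hφ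
  set B : Matrix (Fin n) (Fin n) ℚ := (tutteMatrix G).map φ with hBdef
  have key : ∀ u, ∃! w, M.Adj u w := (SimpleGraph.Subgraph.isPerfectMatching_iff).1 hM
  have hB : ∀ u v, B u v = if M.Adj u v then (if v < u then 1 else -1) else 0 := by
    intro u v
    have hXval : φ (X s(u,v)) = val s(u,v) := aeval_X _ _
    simp only [hBdef, Matrix.map_apply, tutteMatrix, Matrix.of_apply]
    by_cases h : G.Adj u v
    · rw [if_pos h]
      by_cases hm : M.Adj u v
      · have he : s(u,v) ∈ M.edgeSet := hm
        have hv1 : val s(u,v) = 1 := by rw [hval]; simp [he]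
        rw [if_pos hm]
        split_ifs <;> simp [hXval, hv1]
      · have he : s(u,v) ∉ M.edgeSet := hm
        have hv0 : val s(u,v) = 0 := by rw [hval]; simp [he]
        rw [if_neg hm]
        split_ifs <;> simp [hXval, hv0]
    · have hm : ¬ M.Adj u v := fun h' => h (M.adj_sub h')
      rw [if_neg h, if_neg hm, map_zero]
  have hBB : B * B = -1 := by
    ext u v
    rw [Matrix.mul_apply]
    obtain ⟨w₀, hw₀, huniq⟩ := key u
    have hne : u ≠ w₀ := (M.adj_sub hw₀).ne
    rw [Finset.sum_eq_single w₀]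
    · by_cases hv : v = u
      · subst hv
        have hAdj' : M.Adj w₀ v := hw₀.symm
        rcases lt_or_gt_of_ne hne with h1 | h1
        · rw [hB, hB, if_pos hw₀, if_pos hAdj', if_neg (asymm h1), if_pos h1]
          simp
        · rw [hB, hB, if_pos hw₀, if_pos hAdj', if_pos h1, if_neg (asymm h1)]
          simp
      · have hnadj : ¬ M.Adj w₀ v := by
          intro hadj
          obtain ⟨w₁, _, huniq'⟩ := key w₀
          have e1 : v = w₁ := huniq' v hadj
          have e2 : u = w₁ := huniq' u hw₀.symm
          exact hv (e1.trans e2.symm)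
        rw [hB w₀ v, if_neg hnadj, mul_zero]
        simp [Matrix.one_apply, Ne.symm hv]
    · intro b _ hb
      have : ¬ M.Adj u b := fun hadj => hb (huniq b hadj)
      rw [hB u b, if_neg this, zero_mul]
    · intro h; exact absurd (Finset.mem_univ w₀) h
  have hdet2 : B.det * B.det = (-1:ℚ)^n := by
    rw [← Matrix.det_mul, hBB]
    have : (-1 : Matrix (Fin n) (Fin n) ℚ) = -(1 : Matrix (Fin n) (Fin n) ℚ) := rfl
    rw [this, Matrix.det_neg, Matrix.det_one, mul_one, Fintype.card_fin]
  intro h0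
  have : φ ((tutteMatrix G).det) = B.det := (AlgHom.map_det φ (tutteMatrix G))
  rw [h0, map_zero] at this
  rw [← this] at hdet2
  simp only [zero_mul] at hdet2
  exact pow_ne_zero n (by norm_num : (-1:ℚ) ≠ 0) hdet2.symm





noncomputable def mbase (σ : Equiv.Perm (Fin n)) (j : Fin n) : Fin n :=
  if h : ((σ.cycleOf j).support).Nonempty then ((σ.cycleOf j).support).min' h else j

lemma exists_pow_mbase (σ : Equiv.Perm (Fin n)) (j : Fin n) :
    ∃ k : ℕ, (σ ^ k) (mbase σ j) = j := by
  by_cases hj : σ j = j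
  · refine ⟨0, ?_⟩
    have : ¬ ((σ.cycleOf j).support).Nonempty := by
      rw [Finset.nonempty_iff_ne_empty]
      simp [Equiv.Perm.cycleOf_eq_one_iff, hj, Equiv.Perm.support_eq_empty_iff,
        (Equiv.Perm.cycleOf_eq_one_iff σ).2 hj]
    simp [mbase, this]
  · have hne : ((σ.cycleOf j).support).Nonempty :=
      ⟨j, (Equiv.Perm.mem_support_cycleOf_iff' hj).2 (Equiv.Perm.SameCycle.refl σ j)⟩
    have hmem : mbase σ j ∈ (σ.cycleOf j).support := by
      rw [mbase, dif_pos hne]; exact Finset.min'_mem _ _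
    have hsc : σ.SameCycle j (mbase σ j) := (Equiv.Perm.mem_support_cycleOf_iff' hj).1 hmem
    obtain ⟨k, -, hk⟩ := hsc.symm.exists_pow_eq'
    exact ⟨k, hk⟩

noncomputable def mpos (σ : Equiv.Perm (Fin n)) (j : Fin n) : ℕ :=
  Nat.find (exists_pow_mbase σ j)

lemma mpos_spec (σ : Equiv.Perm (Fin n)) (j : Fin n) : (σ ^ mpos σ j) (mbase σ j) = j :=
  Nat.find_spec (exists_pow_mbase σ j)

lemma mbase_eq (σ : Equiv.Perm (Fin n)) {j x : Fin n} (h : σ.SameCycle j x) :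
    mbase σ x = mbase σ j := by
  rw [mbase, mbase, ← h.cycleOf_eq]
  by_cases hne : ((σ.cycleOf j).support).Nonempty
  · rw [dif_pos hne, dif_pos hne]
  · rw [dif_neg hne, dif_neg hne]
    have hj : σ j = j := by
      rw [Finset.not_nonempty_iff_eq_empty, Equiv.Perm.support_eq_empty_iff,
        Equiv.Perm.cycleOf_eq_one_iff] at hne
      exact hne
    obtain ⟨k, hk⟩ := h
    rw [← hk]
    exact Equiv.Perm.zpow_apply_eq_self_of_apply_eq_self hj k

lemma sameCycle_mbase (σ : Equiv.Perm (Fin n)) {j : Fin n} (hj : σ j ≠ j) :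
    σ.SameCycle j (mbase σ j) := by
  have hne : ((σ.cycleOf j).support).Nonempty :=
    ⟨j, (Equiv.Perm.mem_support_cycleOf_iff' hj).2 (Equiv.Perm.SameCycle.refl σ j)⟩
  have hmem : mbase σ j ∈ (σ.cycleOf j).support := by
    rw [mbase, dif_pos hne]; exact Finset.min'_mem _ _
  exact (Equiv.Perm.mem_support_cycleOf_iff' hj).1 hmem

lemma mbase_ne (σ : Equiv.Perm (Fin n)) {j : Fin n} (hj : σ j ≠ j) :
    σ (mbase σ j) ≠ mbase σ j := by
  have := (sameCycle_mbase σ hj).mem_support_iff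
  rw [Equiv.Perm.mem_support, Equiv.Perm.mem_support] at this
  exact this.1 hj

lemma key_dvd (σ : Equiv.Perm (Fin n)) {x : Fin n} (hx : σ x ≠ x) (t : ℕ) :
    (σ ^ t) x = x ↔ ((σ.cycleOf x).support.card) ∣ t := by
  have hcyc := Equiv.Perm.isCycle_cycleOf σ hx
  have hmov : σ.cycleOf x x ≠ x := by rw [Equiv.Perm.cycleOf_apply_self]; exact hx
  constructor
  · intro h
    have hc : σ.cycleOf x ^ t = 1 :=
      (hcyc.pow_eq_one_iff' hmov).2 (by rw [Equiv.Perm.cycleOf_pow_apply_self]; exact h)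
    have := orderOf_dvd_of_pow_eq_one hc
    rwa [hcyc.orderOf] at this
  · rintro ⟨m, rfl⟩
    have h1 : σ.cycleOf x ^ ((σ.cycleOf x).support.card) = 1 := by
      rw [← hcyc.orderOf]; exact pow_orderOf_eq_one _
    rw [← Equiv.Perm.cycleOf_pow_apply_self, pow_mul, h1, one_pow, Equiv.Perm.one_apply]

lemma card_cycleOf_mbase (σ : Equiv.Perm (Fin n)) {j : Fin n} (hj : σ j ≠ j) :
    (σ.cycleOf (mbase σ j)).support.card = (σ.cycleOf j).support.card := by
  rw [(sameCycle_mbase σ hj).cycleOf_eq]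

lemma mpos_lt (σ : Equiv.Perm (Fin n)) {j : Fin n} (hj : σ j ≠ j) :
    mpos σ j < (σ.cycleOf j).support.card := by
  by_contra h
  push_neg at h
  set L := (σ.cycleOf j).support.card with hL
  have hbL : (σ ^ L) (mbase σ j) = mbase σ j :=
    (key_dvd σ (mbase_ne σ hj) L).2 (by rw [card_cycleOf_mbase σ hj])
  have h2 : (σ ^ (mpos σ j - L)) (mbase σ j) = j := by
    have h3 : (σ ^ (mpos σ j - L + L)) (mbase σ j) = j := by
      rw [Nat.sub_add_cancel h]; exact mpos_spec σ j
    rwa [pow_add, Equiv.Perm.mul_apply, hbL] at h3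
  have hLpos : 0 < L :=
    Finset.card_pos.2 ⟨j, (Equiv.Perm.mem_support_cycleOf_iff' hj).2 (Equiv.Perm.SameCycle.refl σ j)⟩
  exact Nat.find_min (exists_pow_mbase σ j) (show mpos σ j - L < mpos σ j by omega) h2

lemma mpos_apply (σ : Equiv.Perm (Fin n)) {j : Fin n} (hj : σ j ≠ j) :
    mpos σ (σ j) = if σ j = mbase σ j then 0 else mpos σ j + 1 := by
  have hbeq : mbase σ (σ j) = mbase σ j := mbase_eq σ ⟨1, by simp⟩
  split_ifs with h
  · rw [mpos, Nat.find_eq_zero]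
    rw [pow_zero, Equiv.Perm.one_apply, hbeq, h]
  · rw [mpos, Nat.find_eq_iff]
    constructor
    · rw [hbeq, pow_succ', Equiv.Perm.mul_apply, mpos_spec]
    · intro m hm hc
      match m with
      | 0 =>
        rw [pow_zero, Equiv.Perm.one_apply, hbeq] at hc
        exact h hc.symm
      | m + 1 =>
        rw [hbeq, pow_succ', Equiv.Perm.mul_apply] at hc
        have := σ.injective hc
        exact Nat.find_min (exists_pow_mbase σ j) (show m < mpos σ j by omega) this

lemma mpos_last (σ : Equiv.Perm (Fin n)) {j : Fin n} (hj : σ j ≠ j) (h : σ j = mbase σ j) :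
    mpos σ j = (σ.cycleOf j).support.card - 1 := by
  set L := (σ.cycleOf j).support.card with hL
  have h1 : (σ ^ (mpos σ j + 1)) (mbase σ j) = mbase σ j := by
    rw [pow_succ', Equiv.Perm.mul_apply, mpos_spec, h]
  have hdvd : L ∣ mpos σ j + 1 := by
    have := (key_dvd σ (mbase_ne σ hj) (mpos σ j + 1)).1 h1
    rwa [card_cycleOf_mbase σ hj] at this
  have hlt := mpos_lt σ hj
  have hle : L ≤ mpos σ j + 1 := Nat.le_of_dvd (by omega) hdvd
  omega

lemma exists_pm_of_even (G : SimpleGraph (Fin n)) (σ : Equiv.Perm (Fin n))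
    (hadj : ∀ i, G.Adj (σ i) i)
    (heven : ∀ i, Even ((σ.cycleOf i).support.card)) :
    ∃ M : G.Subgraph, M.IsPerfectMatching := by
  have hfpf : ∀ i, σ i ≠ i := fun i => (hadj i).ne
  refine ⟨{ verts := Set.univ
            Adj := fun u v => (v = σ u ∧ Even (mpos σ u)) ∨ (u = σ v ∧ Even (mpos σ v))
            adj_sub := ?_
            edge_vert := fun _ => Set.mem_univ _
            symm := ⟨fun u v h => Or.symm h⟩ },
          SimpleGraph.Subgraph.isPerfectMatching_iff.2 ?_⟩
  · rintro u v (⟨rfl, -⟩ | ⟨rfl, -⟩)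
    · exact (hadj u).symm
    · exact hadj v
  · intro v
    rcases Nat.even_or_odd (mpos σ v) with hv | hv
    · refine ⟨σ v, Or.inl ⟨rfl, hv⟩, ?_⟩
      rintro w (⟨rfl, -⟩ | ⟨hw, hw2⟩)
      · rfl
      · exfalso
        subst hw
        have hp := mpos_apply σ (hfpf w)
        by_cases hb : σ w = mbase σ w
        · rw [if_pos hb] at hp
          have h6 := mpos_last σ (hfpf w) hb
          have hLpos : 0 < (σ.cycleOf w).support.card :=
            Finset.card_pos.2 ⟨w, (Equiv.Perm.mem_support_cycleOf_iff' (hfpf w)).2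
              (Equiv.Perm.SameCycle.refl σ w)⟩
          have hE := heven w
          rw [h6] at hw2
          rw [Nat.even_iff] at hw2 hE
          omega
        · rw [if_neg hb] at hp
          rw [Nat.even_iff] at hv hw2
          omega
    · have h1 : σ (σ⁻¹ v) = v := Equiv.Perm.apply_inv_self σ v
      have hp := mpos_apply σ (hfpf (σ⁻¹ v))
      rw [h1] at hp
      have hb : ¬ (v = mbase σ (σ⁻¹ v)) := by
        intro hb
        rw [if_pos hb] at hp
        rw [hp] at hv
        simp [Nat.odd_iff] at hv
      rw [if_neg hb] at hp
      have heq : Even (mpos σ (σ⁻¹ v)) := by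
        rw [Nat.odd_iff] at hv
        rw [Nat.even_iff]
        omega
      refine ⟨σ⁻¹ v, Or.inr ⟨h1.symm, heq⟩, ?_⟩
      rintro w (⟨-, hw2⟩ | ⟨hw, -⟩)
      · exfalso
        rw [Nat.even_iff] at hw2
        rw [Nat.odd_iff] at hv
        omega
      · rw [hw]
        exact (Equiv.Perm.inv_apply_self σ w).symm





def revCycle (σ : Equiv.Perm (Fin n)) (i : Fin n) : Equiv.Perm (Fin n) :=
  σ * (σ.cycleOf i)⁻¹ * (σ.cycleOf i)⁻¹

lemma supp_inv_apply (σ : Equiv.Perm (Fin n)) (i : Fin n) (hi : σ i ≠ i) (x : Fin n) :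
    σ x ∈ (σ.cycleOf i).support ↔ x ∈ (σ.cycleOf i).support := by
  rw [Equiv.Perm.mem_support_cycleOf_iff' hi, Equiv.Perm.mem_support_cycleOf_iff' hi,
    Equiv.Perm.sameCycle_apply_right]

lemma cinv_apply (σ : Equiv.Perm (Fin n)) (i : Fin n) (hi : σ i ≠ i) (x : Fin n) :
    (σ.cycleOf i)⁻¹ x = if x ∈ (σ.cycleOf i).support then σ⁻¹ x else x := by
  split_ifs with h
  · rw [Equiv.Perm.mem_support_cycleOf_iff' hi] at h
    have h2 : σ.SameCycle i (σ⁻¹ x) := Equiv.Perm.sameCycle_inv_apply_right.2 h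
    have h3 : σ.cycleOf i (σ⁻¹ x) = x := by
      rw [h2.cycleOf_apply, Equiv.Perm.apply_inv_self]
    conv_lhs => rw [← h3]
    exact Equiv.Perm.inv_apply_self _ _
  · rw [Equiv.Perm.mem_support_cycleOf_iff' hi] at h
    have h3 : σ.cycleOf i x = x := Equiv.Perm.cycleOf_apply_of_not_sameCycle h
    calc (σ.cycleOf i)⁻¹ x = (σ.cycleOf i)⁻¹ (σ.cycleOf i x) := by rw [h3]
      _ = x := Equiv.Perm.inv_apply_self _ _

lemma rev_apply (σ : Equiv.Perm (Fin n)) (i : Fin n) (hi : σ i ≠ i) (x : Fin n) :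
    revCycle σ i x = if x ∈ (σ.cycleOf i).support then σ⁻¹ x else σ x := by
  simp only [revCycle, Equiv.Perm.mul_apply]
  rw [cinv_apply σ i hi x]
  split_ifs with h
  · have h2 : σ⁻¹ x ∈ (σ.cycleOf i).support := by
      rw [← supp_inv_apply σ i hi (σ⁻¹ x), Equiv.Perm.apply_inv_self]
      exact h
    rw [cinv_apply σ i hi, if_pos h2, Equiv.Perm.apply_inv_self]
  · rw [cinv_apply σ i hi, if_neg h]

lemma rev_support (σ : Equiv.Perm (Fin n)) (i : Fin n) (hi : σ i ≠ i) :
    (revCycle σ i).support = σ.support := by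
  ext x
  rw [Equiv.Perm.mem_support, Equiv.Perm.mem_support, rev_apply σ i hi]
  split_ifs with h
  · simp only [ne_eq, Equiv.Perm.inv_eq_iff_eq]
    exact not_congr eq_comm
  · exact Iff.rfl

lemma sameCycle_flip {σ τ : Equiv.Perm (Fin n)} {S : Finset (Fin n)}
    (h1 : ∀ x ∈ S, τ x = σ⁻¹ x) (h2 : ∀ x ∉ S, τ x = σ x) {a b : Fin n}
    (h : τ.SameCycle a b) : σ.SameCycle a b := by
  obtain ⟨k, -, hk⟩ := h.exists_pow_eq'
  have claim : ∀ m : ℕ, σ.SameCycle a ((τ ^ m) a) := by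
    intro m
    induction m with
    | zero => simpa using Equiv.Perm.SameCycle.refl σ a
    | succ m ih =>
      rw [pow_succ', Equiv.Perm.mul_apply]
      by_cases hy : (τ ^ m) a ∈ S
      · rw [h1 _ hy]
        exact ih.trans ⟨-1, by simp⟩
      · rw [h2 _ hy]
        exact ih.trans ⟨1, by simp⟩
  exact hk ▸ claim k

lemma rev_sameCycle (σ : Equiv.Perm (Fin n)) (i : Fin n) (hi : σ i ≠ i) (a b : Fin n) :
    (revCycle σ i).SameCycle a b ↔ σ.SameCycle a b := by
  have h1 : ∀ x ∈ (σ.cycleOf i).support, revCycle σ i x = σ⁻¹ x := fun x hx => by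
    rw [rev_apply σ i hi, if_pos hx]
  have h2 : ∀ x ∉ (σ.cycleOf i).support, revCycle σ i x = σ x := fun x hx => by
    rw [rev_apply σ i hi, if_neg hx]
  constructor
  · exact sameCycle_flip h1 h2
  · refine sameCycle_flip (σ := revCycle σ i) (τ := σ) (S := (σ.cycleOf i).support) ?_ ?_
    · intro x hx
      have hrev : revCycle σ i (σ x) = x := by
        rw [rev_apply σ i hi, if_pos ((supp_inv_apply σ i hi x).2 hx),
          Equiv.Perm.inv_apply_self]
      exact Equiv.Perm.eq_inv_iff_eq.2 hrev
    · intro x hx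
      exact (h2 x hx).symm

lemma rev_cycleOf_support (σ : Equiv.Perm (Fin n)) (i : Fin n) (hi : σ i ≠ i) (x : Fin n) :
    ((revCycle σ i).cycleOf x).support = (σ.cycleOf x).support := by
  ext y
  rw [Equiv.Perm.mem_support_cycleOf_iff, Equiv.Perm.mem_support_cycleOf_iff,
    rev_sameCycle σ i hi, rev_support σ i hi]

lemma rev_cycleOf_eq (σ : Equiv.Perm (Fin n)) (i : Fin n) (hi : σ i ≠ i) :
    (revCycle σ i).cycleOf i = (σ.cycleOf i)⁻¹ := by
  ext x
  rw [Equiv.Perm.cycleOf_apply, cinv_apply σ i hi]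
  by_cases h : x ∈ (σ.cycleOf i).support
  · rw [if_pos ((rev_sameCycle σ i hi i x).2 ((Equiv.Perm.mem_support_cycleOf_iff' hi).1 h)),
      if_pos h, rev_apply σ i hi, if_pos h]
  · rw [if_neg h, if_neg (fun hc =>
      h ((Equiv.Perm.mem_support_cycleOf_iff' hi).2 ((rev_sameCycle σ i hi i x).1 hc)))]

lemma rev_rev (σ : Equiv.Perm (Fin n)) (i : Fin n) (hi : σ i ≠ i) :
    revCycle (revCycle σ i) i = σ := by
  unfold revCycle
  rw [show (σ * (σ.cycleOf i)⁻¹ * (σ.cycleOf i)⁻¹).cycleOf i = (σ.cycleOf i)⁻¹ from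
    rev_cycleOf_eq σ i hi]
  group

lemma rev_sign (σ : Equiv.Perm (Fin n)) (i : Fin n) :
    Equiv.Perm.sign (revCycle σ i) = Equiv.Perm.sign σ := by
  unfold revCycle
  rw [map_mul, map_mul, map_inv, Int.units_inv_eq_self, mul_assoc, Int.units_mul_self, mul_one]

def oddF (σ : Equiv.Perm (Fin n)) : Finset (Fin n) :=
  Finset.univ.filter (fun i => Odd ((σ.cycleOf i).support.card))

noncomputable def gmap (σ : Equiv.Perm (Fin n)) : Equiv.Perm (Fin n) :=
  if h : (oddF σ).Nonempty then revCycle σ ((oddF σ).min' h) else σ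

lemma oddF_ne (σ : Equiv.Perm (Fin n)) {i : Fin n} (h : i ∈ oddF σ) : σ i ≠ i := by
  rw [oddF, Finset.mem_filter] at h
  intro he
  have := h.2
  rw [(Equiv.Perm.cycleOf_eq_one_iff σ).2 he] at this
  simp [Nat.odd_iff] at this

lemma gmap_invol (σ : Equiv.Perm (Fin n)) : gmap (gmap σ) = σ := by
  by_cases h : (oddF σ).Nonempty
  · have hmem := Finset.min'_mem _ h
    set i₀ := (oddF σ).min' h with hi₀
    have hi : σ i₀ ≠ i₀ := oddF_ne σ hmem
    have hgσ : gmap σ = revCycle σ i₀ := dif_pos h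
    have hofeq : oddF (revCycle σ i₀) = oddF σ := by
      unfold oddF
      ext j
      simp only [Finset.mem_filter, rev_cycleOf_support σ i₀ hi j]
    rw [hgσ, gmap, hofeq, dif_pos h, ← hi₀]
    exact rev_rev σ i₀ hi
  · have hg : gmap σ = σ := dif_neg h
    rw [hg]
    exact hg

lemma det_eq_zero_of_no_pm (G : SimpleGraph (Fin n)) [DecidableRel G.Adj]
    (hno : ¬ ∃ M : G.Subgraph, M.IsPerfectMatching) : (tutteMatrix G).det = 0 := by
  classical
  rw [Matrix.det_apply]
  have hg1 : ∀ σ : Equiv.Perm (Fin n),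
      (Equiv.Perm.sign σ • ∏ x, tutteMatrix G (σ x) x)
        + (Equiv.Perm.sign (gmap σ) • ∏ x, tutteMatrix G (gmap σ x) x) = 0 := by
    intro σ
    by_cases h : (oddF σ).Nonempty
    · have hmem := Finset.min'_mem _ h
      set i₀ := (oddF σ).min' h with hi₀
      have hi : σ i₀ ≠ i₀ := oddF_ne σ hmem
      have hodd : Odd ((σ.cycleOf i₀).support.card) := by
        rw [oddF, Finset.mem_filter] at hmem
        exact hmem.2
      have hgσ : gmap σ = revCycle σ i₀ := dif_pos h
      set S := (σ.cycleOf i₀).support with hSdef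
      have hprod : ∏ x, tutteMatrix G (revCycle σ i₀ x) x = - ∏ x, tutteMatrix G (σ x) x := by
        have hc : ∏ x ∈ Sᶜ, tutteMatrix G (revCycle σ i₀ x) x
            = ∏ x ∈ Sᶜ, tutteMatrix G (σ x) x :=
          Finset.prod_congr rfl fun x hx => by
            rw [rev_apply σ i₀ hi, if_neg (Finset.mem_compl.1 hx)]
        have e1 : ∏ x ∈ S, tutteMatrix G (revCycle σ i₀ x) x
            = ∏ x ∈ S, -(tutteMatrix G x (σ⁻¹ x)) :=
          Finset.prod_congr rfl fun x hx => by
            rw [rev_apply σ i₀ hi, if_pos hx, tutte_skew]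
        have e2 : ∏ x ∈ S, -(tutteMatrix G x (σ⁻¹ x))
            = (-1 : MvPolynomial (Sym2 (Fin n)) ℚ)^S.card * ∏ x ∈ S, tutteMatrix G x (σ⁻¹ x) := by
          rw [← Finset.prod_const, ← Finset.prod_mul_distrib]
          exact Finset.prod_congr rfl fun x _ => (neg_one_mul _).symm
        have e3 : ∏ x ∈ S, tutteMatrix G x (σ⁻¹ x) = ∏ x ∈ S, tutteMatrix G (σ x) x := by
          refine Finset.prod_bij' (fun a _ => σ⁻¹ a) (fun a _ => σ a) ?_ ?_ ?_ ?_ ?_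
          · intro a ha
            have h4 := supp_inv_apply σ i₀ hi (σ⁻¹ a)
            rw [Equiv.Perm.apply_inv_self] at h4
            exact h4.1 ha
          · intro a ha
            exact (supp_inv_apply σ i₀ hi a).2 ha
          · intro a ha
            exact Equiv.Perm.apply_inv_self σ a
          · intro a ha
            exact Equiv.Perm.inv_apply_self σ a
          · intro a ha
            rw [Equiv.Perm.apply_inv_self]
        have hs : ∏ x ∈ S, tutteMatrix G (revCycle σ i₀ x) x
            = - ∏ x ∈ S, tutteMatrix G (σ x) x := by
          rw [e1, e2, e3, hodd.neg_one_pow, neg_one_mul]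
        calc ∏ x, tutteMatrix G (revCycle σ i₀ x) x
            = (∏ x ∈ S, tutteMatrix G (revCycle σ i₀ x) x)
              * ∏ x ∈ Sᶜ, tutteMatrix G (revCycle σ i₀ x) x :=
              (Finset.prod_mul_prod_compl S _).symm
          _ = (- ∏ x ∈ S, tutteMatrix G (σ x) x) * ∏ x ∈ Sᶜ, tutteMatrix G (σ x) x := by
              rw [hs, hc]
          _ = -((∏ x ∈ S, tutteMatrix G (σ x) x) * ∏ x ∈ Sᶜ, tutteMatrix G (σ x) x) :=
              neg_mul _ _
          _ = - ∏ x, tutteMatrix G (σ x) x := by rw [Finset.prod_mul_prod_compl]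
      rw [hgσ, rev_sign σ i₀, hprod, smul_neg, add_neg_cancel]
    · have hgσ : gmap σ = σ := dif_neg h
      have hall : ∀ i, Even ((σ.cycleOf i).support.card) := by
        intro i
        rcases Nat.even_or_odd ((σ.cycleOf i).support.card) with he | ho
        · exact he
        · exact absurd ⟨i, Finset.mem_filter.2 ⟨Finset.mem_univ i, ho⟩⟩ h
      have hzero : ∏ x, tutteMatrix G (σ x) x = 0 := by
        by_cases hadj : ∀ x, G.Adj (σ x) x
        · exact absurd (exists_pm_of_even G σ hadj hall) hno
        · push_neg at hadj
          obtain ⟨x, hx⟩ := hadj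
          refine Finset.prod_eq_zero (Finset.mem_univ x) ?_
          simp [tutteMatrix, hx]
      rw [hgσ, hzero, smul_zero, add_zero]
  refine Finset.sum_ninvolution gmap hg1 ?_ (fun _ => Finset.mem_univ _) gmap_invol
  intro σ hne hgg
  have h1 := hg1 σ
  rw [hgg] at h1
  exact hne (add_self_eq_zero.mp h1)


end TutteAux

/-- A finite simple graph has a perfect matching iff the determinant of its Tutte matrix
is not identically zero. -/
theorem stmt_2 {n : ℕ} (G : SimpleGraph (Fin n)) [DecidableRel G.Adj] :
    (∃ M : G.Subgraph, M.IsPerfectMatching) ↔ (tutteMatrix G).det ≠ 0 := by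
  constructor
  · rintro ⟨M, hM⟩
    exact TutteAux.det_ne_zero_of_pm G M hM
  · intro h
    by_contra hno
    exact h (TutteAux.det_eq_zero_of_no_pm G hno)
end

section
/- (Schwartz–Zippel) Let F be a nonzero polynomial in n variables over the reals (or over an integral domain) of total degree at most D, and let S be a finite set of scalars. If a point a = (a_1,...,a_n) is chosen with each coordinate independently and uniformly at random from S, then the probability that F(a) = 0 is at most D/|S|. -/
open Finset

private lemma sz_aux {R : Type*} [CommRing R] [IsDomain R] [DecidableEq R] :
    ∀ (n : ℕ) (F : MvPolynomial (Fin n) R), F ≠ 0 → ∀ (S : Finset R),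
    ((Fintype.piFinset fun _ : Fin n => S).filter
        (fun a => MvPolynomial.eval a F = 0)).card * S.card
      ≤ F.totalDegree * S.card ^ n := by
  intro n
  induction n with
  | zero =>
    intro F hF S
    obtain ⟨c, rfl⟩ := MvPolynomial.C_surjective (Fin 0) F
    have hc : c ≠ 0 := fun h => hF (by rw [h, map_zero])
    have h0 : ((Fintype.piFinset fun _ : Fin 0 => S).filter
        (fun a => MvPolynomial.eval a (MvPolynomial.C c) = 0)) = ∅ := by
      apply Finset.filter_false_of_mem
      intro a _
      simp [hc]
    rw [h0]
    simp
  | succ n ih =>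
    intro F hF S
    set q := MvPolynomial.finSuccEquiv R n F with hq
    have hq0 : q ≠ 0 := by
      simp [hq, hF]
    set d := q.natDegree with hd
    set g := q.leadingCoeff with hg
    have hg0 : g ≠ 0 := Polynomial.leadingCoeff_ne_zero.2 hq0
    have hdD : d ≤ F.totalDegree := by
      rw [hd, MvPolynomial.natDegree_finSuccEquiv]
      exact MvPolynomial.degreeOf_le_totalDegree F 0
    have hgdeg : g.totalDegree + d ≤ F.totalDegree := by
      have := MvPolynomial.totalDegree_coeff_finSuccEquiv_add_le F d
        (by rw [← Polynomial.leadingCoeff]; exact hg0)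
      exact this
    set P := Fintype.piFinset fun _ : Fin n => S with hP
    set A := P.filter (fun s => MvPolynomial.eval s g = 0) with hA
    -- IH for the leading coefficient
    have hIH : A.card * S.card ≤ g.totalDegree * S.card ^ n := ih g hg0 S
    set T := (Fintype.piFinset fun _ : Fin (n + 1) => S).filter
        (fun a => MvPolynomial.eval a F = 0) with hT
    classical
    set U₂ : Finset ((Fin n → R) × R) := (P \ A).biUnion
        (fun s => (S.filter (fun y =>
            Polynomial.eval y (Polynomial.map (MvPolynomial.eval s) q) = 0)).image
          (fun y => (s, y))) with hU₂
    -- T injects into (A ×ˢ S) ∪ U₂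
    have hTcard : T.card ≤ ((A ×ˢ S) ∪ U₂).card := by
      apply Finset.card_le_card_of_injOn (fun a => (Fin.tail a, a 0))
      · intro a ha
        rw [hT, Finset.mem_coe, Finset.mem_filter] at ha
        obtain ⟨haS, ha0⟩ := ha
        rw [Fintype.mem_piFinset] at haS
        have htail : Fin.tail a ∈ P := by
          rw [hP, Fintype.mem_piFinset]; intro i; exact haS i.succ
        have heval : Polynomial.eval (a 0)
            (Polynomial.map (MvPolynomial.eval (Fin.tail a)) q) = 0 := by
          rw [← MvPolynomial.eval_eq_eval_mv_eval', Fin.cons_self_tail]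
          exact ha0
        rw [Finset.mem_coe, Finset.mem_union]
        by_cases hcase : MvPolynomial.eval (Fin.tail a) g = 0
        · left
          rw [Finset.mem_product]
          exact ⟨Finset.mem_filter.2 ⟨htail, hcase⟩, haS 0⟩
        · right
          rw [hU₂, Finset.mem_biUnion]
          refine ⟨Fin.tail a, ?_, ?_⟩
          · rw [Finset.mem_sdiff]
            exact ⟨htail, fun h => hcase (Finset.mem_filter.1 h).2⟩
          · rw [Finset.mem_image]
            exact ⟨a 0, Finset.mem_filter.2 ⟨haS 0, heval⟩, rfl⟩
      · intro a _ b _ hab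
        have h1 : Fin.tail a = Fin.tail b := congrArg Prod.fst hab
        have h2 : a 0 = b 0 := congrArg Prod.snd hab
        rw [← Fin.cons_self_tail a, ← Fin.cons_self_tail b, h1, h2]
    have hU₂card : U₂.card ≤ P.card * d := by
      refine le_trans (Finset.card_biUnion_le) ?_
      have : ∀ s ∈ P \ A,
          ((S.filter (fun y =>
            Polynomial.eval y (Polynomial.map (MvPolynomial.eval s) q) = 0)).image
          (fun y => (s, y))).card ≤ d := by
        intro s hs
        rw [Finset.mem_sdiff, hA, Finset.mem_filter] at hs
        have hsg : MvPolynomial.eval s g ≠ 0 := fun h => hs.2 ⟨hs.1, h⟩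
        set p := Polynomial.map (MvPolynomial.eval s) q with hp
        have hp0 : p ≠ 0 := fun h => hsg (by
          have := Polynomial.leadingCoeff_eq_zero.2 h
          rwa [hp, Polynomial.leadingCoeff, Polynomial.coeff_map,
            Polynomial.natDegree_map_of_leadingCoeff_ne_zero _ hsg] at this)
        refine le_trans (Finset.card_image_le) ?_
        have hsub : (S.filter (fun y => Polynomial.eval y p = 0)).val ⊆ p.roots := by
          intro y hy
          rw [Finset.mem_val, Finset.mem_filter] at hy
          exact (Polynomial.mem_roots hp0).2 hy.2
        refine le_trans (Polynomial.card_le_degree_of_subset_roots hsub) ?_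
        rw [hp, Polynomial.natDegree_map_of_leadingCoeff_ne_zero _ hsg]
      calc ∑ s ∈ P \ A, ((S.filter (fun y =>
            Polynomial.eval y (Polynomial.map (MvPolynomial.eval s) q) = 0)).image
          (fun y => (s, y))).card
          ≤ ∑ _s ∈ P \ A, d := Finset.sum_le_sum this
        _ = (P \ A).card * d := by rw [Finset.sum_const, smul_eq_mul]
        _ ≤ P.card * d := Nat.mul_le_mul_right d (Finset.card_le_card (Finset.sdiff_subset))
    have hPcard : P.card = S.card ^ n := by
      simp [hP]
    have hmain : T.card ≤ A.card * S.card + S.card ^ n * d := by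
      refine hTcard.trans ?_
      refine le_trans (Finset.card_union_le _ _) ?_
      rw [Finset.card_product]
      have := hU₂card
      rw [hPcard] at this
      omega
    calc T.card * S.card ≤ (A.card * S.card + S.card ^ n * d) * S.card :=
          Nat.mul_le_mul_right _ hmain
      _ = (A.card * S.card) * S.card + d * S.card ^ (n + 1) := by ring
      _ ≤ (g.totalDegree * S.card ^ n) * S.card + d * S.card ^ (n + 1) :=
          Nat.add_le_add_right (Nat.mul_le_mul_right _ hIH) _
      _ = (g.totalDegree + d) * S.card ^ (n + 1) := by ring
      _ ≤ F.totalDegree * S.card ^ (n + 1) := Nat.mul_le_mul_right _ hgdeg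

/-- Schwartz–Zippel: if `F` is a nonzero polynomial in `n` variables over an integral
domain, of total degree at most `D`, and each coordinate of `a` is chosen independently and
uniformly from a finite set `S`, then `P[F(a) = 0] ≤ D / |S|`; equivalently, the number of
roots in `S^n`, times `|S|`, is at most `D·|S|^n`. -/
theorem stmt_3 {R : Type*} [CommRing R] [IsDomain R] [DecidableEq R]
    (n D : ℕ) (F : MvPolynomial (Fin n) R) (hF : F ≠ 0) (hdeg : F.totalDegree ≤ D)
    (S : Finset R) :
    ((Fintype.piFinset fun _ : Fin n => S).filter
        (fun a => MvPolynomial.eval a F = 0)).card * S.card ≤ D * S.card ^ n := by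
  exact (sz_aux n F hF S).trans (Nat.mul_le_mul_right _ hdeg)
end

section
/- Let A be an n×n skew-symmetric matrix over a commutative ring and let π be a permutation of {1,...,n} whose cycle decomposition contains an odd cycle σ. Let π' be the permutation obtained from π by reversing the cycle σ. Then sgn(π)·∏_{i=1}^n A_{i,π(i)} = -sgn(π')·∏_{i=1}^n A_{i,π'(i)}. Consequently, in the Leibniz expansion of det(A), the contributions of permutations containing odd cycles cancel in pairs. -/
open Finset Equiv

lemma key_lemma {R : Type*} [CommRing R] {n : ℕ} (A : Matrix (Fin n) (Fin n) R)
    (hskew : ∀ i j, A j i = -A i j)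
    (σ τ : Equiv.Perm (Fin n)) (hcyc : σ.IsCycle) (hodd : Odd σ.support.card)
    (hdisj : σ.Disjoint τ) :
    ((Equiv.Perm.sign (σ * τ) : ℤ) : R) * ∏ i, A i ((σ * τ) i)
      = -(((Equiv.Perm.sign (σ⁻¹ * τ) : ℤ) : R) * ∏ i, A i ((σ⁻¹ * τ) i)) := by
  have hfix : ∀ i ∈ σ.support, τ i = i := by
    intro i hi
    rcases hdisj i with h | h
    · exact absurd h (Equiv.Perm.mem_support.mp hi)
    · exact h
  have houts : ∀ i ∉ σ.support, (σ * τ) i = τ i ∧ (σ⁻¹ * τ) i = τ i := by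
    intro i hi
    rw [Equiv.Perm.notMem_support] at hi
    by_cases ht : τ i = i
    · simp only [Equiv.Perm.mul_apply, ht, hi]
      refine ⟨trivial, ?_⟩
      rw [Equiv.Perm.inv_eq_iff_eq]; exact hi.symm
    · have : τ i ∉ σ.support := by
        intro hmem
        have := hfix _ hmem
        have h2 : τ (τ i) = τ i := this
        exact ht (τ.injective h2)
      rw [Equiv.Perm.notMem_support] at this
      simp [Equiv.Perm.mul_apply, this]
      rw [Equiv.symm_apply_eq]; exact this.symm
  have hsign : Equiv.Perm.sign (σ * τ) = Equiv.Perm.sign (σ⁻¹ * τ) := by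
    simp [Equiv.Perm.sign_mul]
  -- split products
  have hsplit : ∀ ρ : Equiv.Perm (Fin n), (∀ i ∉ σ.support, ρ i = τ i) →
      (∀ i ∈ σ.support, ρ i = σ.1 i ∨ True) → True := fun _ _ _ => trivial
  have hprod : ∀ ρ : Equiv.Perm (Fin n),
      ∏ i, A i (ρ i) = (∏ i ∈ σ.support, A i (ρ i)) * ∏ i ∈ σ.supportᶜ, A i (ρ i) :=
    fun ρ => (Finset.prod_mul_prod_compl _ _).symm
  have hout_eq : ∏ i ∈ σ.supportᶜ, A i ((σ * τ) i) = ∏ i ∈ σ.supportᶜ, A i ((σ⁻¹ * τ) i) := by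
    apply Finset.prod_congr rfl
    intro i hi
    rw [Finset.mem_compl] at hi
    rw [(houts i hi).1, (houts i hi).2]
  have hin1 : ∏ i ∈ σ.support, A i ((σ * τ) i) = ∏ i ∈ σ.support, A i (σ i) := by
    apply Finset.prod_congr rfl
    intro i hi
    rw [Equiv.Perm.mul_apply, hfix i hi]
  have hin2 : ∏ i ∈ σ.support, A i ((σ⁻¹ * τ) i) = ∏ i ∈ σ.support, A i (σ⁻¹ i) := by
    apply Finset.prod_congr rfl
    intro i hi
    rw [Equiv.Perm.mul_apply, hfix i hi]
  have hrev : ∏ i ∈ σ.support, A i (σ⁻¹ i) = -∏ i ∈ σ.support, A i (σ i) := by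
    have h1 : ∏ i ∈ σ.support, A (σ i) i = ∏ i ∈ σ.support, A i (σ⁻¹ i) := by
      apply Finset.prod_bij (fun a _ => σ a)
      · intro a ha; exact Equiv.Perm.apply_mem_support.mpr ha
      · intro a _ b _ h; exact σ.injective h
      · intro b hb
        exact ⟨σ⁻¹ b, Equiv.Perm.apply_mem_support.mp (by simpa using hb), by simp⟩
      · intro a _; simp
    have h2 : ∏ i ∈ σ.support, A (σ i) i = -∏ i ∈ σ.support, A i (σ i) := by
      calc ∏ i ∈ σ.support, A (σ i) i = ∏ i ∈ σ.support, (-1 * A i (σ i)) := by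
            apply Finset.prod_congr rfl; intro i _; rw [hskew]; ring
        _ = (-1) ^ σ.support.card * ∏ i ∈ σ.support, A i (σ i) := by
            rw [Finset.prod_mul_distrib, Finset.prod_const]
        _ = -∏ i ∈ σ.support, A i (σ i) := by rw [hodd.neg_one_pow]; ring
    rw [← h1, h2]
  rw [hprod (σ * τ), hprod (σ⁻¹ * τ), hsign, hout_eq, hin1, hin2, hrev]
  ring


lemma rev_lemma {n : ℕ} {p g : Equiv.Perm (Fin n)} (hg : g ∈ p.cycleFactorsFinset) :
    g.Disjoint (g⁻¹ * p) ∧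
    g⁻¹ ∈ (g⁻¹ * (g⁻¹ * p)).cycleFactorsFinset ∧
    ∀ x, ((g⁻¹ * (g⁻¹ * p)).cycleOf x).support = (p.cycleOf x).support := by
  obtain ⟨hgc, hgp⟩ := Equiv.Perm.mem_cycleFactorsFinset_iff.mp hg
  set τ := g⁻¹ * p with hτ
  set q := g⁻¹ * τ with hq
  have hd : g.Disjoint τ := by
    intro x
    by_cases hx : g x = x
    · exact Or.inl hx
    · right
      have : g x = p x := hgp x (Equiv.Perm.mem_support.mpr hx)
      simp [hτ, Equiv.Perm.mul_apply, ← this]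
  have hd' : g⁻¹.Disjoint τ := hd.inv_left
  have hp : p = g * τ := by rw [hτ]; group
  have factp : p.cycleFactorsFinset = {g} ∪ τ.cycleFactorsFinset := by
    rw [hp, hd.cycleFactorsFinset_mul_eq_union, hgc.cycleFactorsFinset_eq_singleton]
  have factq : q.cycleFactorsFinset = {g⁻¹} ∪ τ.cycleFactorsFinset := by
    rw [hq, hd'.cycleFactorsFinset_mul_eq_union, hgc.inv.cycleFactorsFinset_eq_singleton]
  have hginv : g⁻¹ ∈ q.cycleFactorsFinset := by
    rw [factq]; exact Finset.mem_union_left _ (Finset.mem_singleton_self _)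
  refine ⟨hd, hginv, ?_⟩
  intro x
  by_cases hxg : x ∈ g.support
  · have h1 : p.cycleOf x = g := (Equiv.Perm.cycle_is_cycleOf hxg hg).symm
    have h2 : q.cycleOf x = g⁻¹ :=
      (Equiv.Perm.cycle_is_cycleOf (by rwa [Equiv.Perm.support_inv]) hginv).symm
    rw [h1, h2, Equiv.Perm.support_inv]
  · by_cases hxt : x ∈ τ.support
    · set c := τ.cycleOf x with hc
      have hcf : c ∈ τ.cycleFactorsFinset := Equiv.Perm.cycleOf_mem_cycleFactorsFinset_iff.mpr hxt
      have hxc : x ∈ c.support :=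
        Equiv.Perm.mem_support_cycleOf_iff.mpr ⟨Equiv.Perm.SameCycle.refl _ _, hxt⟩
      have h1 : p.cycleOf x = c :=
        (Equiv.Perm.cycle_is_cycleOf hxc (by rw [factp]; exact Finset.mem_union_right _ hcf)).symm
      have h2 : q.cycleOf x = c :=
        (Equiv.Perm.cycle_is_cycleOf hxc (by rw [factq]; exact Finset.mem_union_right _ hcf)).symm
      rw [h1, h2]
    · have hpx : p x = x := by
        rw [hp]
        simp [Equiv.Perm.mul_apply, Equiv.Perm.notMem_support.mp hxt,
          Equiv.Perm.notMem_support.mp hxg]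
      have hqx : q x = x := by
        rw [hq]
        simp only [Equiv.Perm.mul_apply, Equiv.Perm.notMem_support.mp hxt]
        rw [Equiv.Perm.inv_eq_iff_eq]
        exact (Equiv.Perm.notMem_support.mp hxg).symm
      rw [(Equiv.Perm.cycleOf_eq_one_iff _).mpr hpx, (Equiv.Perm.cycleOf_eq_one_iff _).mpr hqx]

def oddSet {n : ℕ} (p : Equiv.Perm (Fin n)) : Finset (Fin n) :=
  Finset.univ.filter fun x => Odd (p.cycleOf x).support.card

def revAt {n : ℕ} (p : Equiv.Perm (Fin n)) (x : Fin n) : Equiv.Perm (Fin n) :=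
  (p.cycleOf x)⁻¹ * ((p.cycleOf x)⁻¹ * p)

lemma oddSet_nonempty {n : ℕ} {p : Equiv.Perm (Fin n)}
    (hp : ∃ g ∈ p.cycleFactorsFinset, Odd g.support.card) : (oddSet p).Nonempty := by
  obtain ⟨g, hg, hodd⟩ := hp
  have hgc := (Equiv.Perm.mem_cycleFactorsFinset_iff.mp hg).1
  obtain ⟨x, hx⟩ := hgc.nonempty_support
  refine ⟨x, ?_⟩
  rw [oddSet, Finset.mem_filter]
  refine ⟨Finset.mem_univ _, ?_⟩
  rw [← Equiv.Perm.cycle_is_cycleOf hx hg]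
  exact hodd

lemma rev_core {n : ℕ} (p : Equiv.Perm (Fin n)) (x0 : Fin n)
    (hodd : Odd (p.cycleOf x0).support.card) :
    oddSet (revAt p x0) = oddSet p ∧ revAt (revAt p x0) x0 = p ∧ revAt p x0 ≠ p ∧
    (∃ g' ∈ (revAt p x0).cycleFactorsFinset, Odd g'.support.card) ∧
    p.cycleOf x0 ∈ p.cycleFactorsFinset ∧ (p.cycleOf x0).IsCycle := by
  set g := p.cycleOf x0 with hgdef
  have hps : x0 ∈ p.support := by
    by_contra h
    rw [Equiv.Perm.notMem_support] at h
    rw [hgdef, (Equiv.Perm.cycleOf_eq_one_iff _).mpr h] at hodd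
    simp at hodd
  have hgc : g.IsCycle := Equiv.Perm.isCycle_cycleOf _ (Equiv.Perm.mem_support.mp hps)
  have hgmem : g ∈ p.cycleFactorsFinset :=
    Equiv.Perm.cycleOf_mem_cycleFactorsFinset_iff.mpr hps
  have hx0g : x0 ∈ g.support :=
    Equiv.Perm.mem_support_cycleOf_iff.mpr ⟨Equiv.Perm.SameCycle.refl _ _, hps⟩
  obtain ⟨hd, hginv, hsupp⟩ := rev_lemma hgmem
  set q := g⁻¹ * (g⁻¹ * p) with hqdef
  have hrq : revAt p x0 = q := rfl
  have hqcyc : q.cycleOf x0 = g⁻¹ :=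
    (Equiv.Perm.cycle_is_cycleOf (by rwa [Equiv.Perm.support_inv]) hginv).symm
  have hset : oddSet q = oddSet p := by
    ext x
    simp only [oddSet, Finset.mem_filter, Finset.mem_univ, true_and, hsupp x]
  have hinvol : revAt q x0 = p := by
    rw [revAt, hqcyc, hqdef]
    group
  have hne : q ≠ p := by
    intro h
    have h2 : g⁻¹ * g⁻¹ = 1 := by
      have := h
      rw [hqdef] at this
      have h3 : g⁻¹ * g⁻¹ * p = p := by rw [← mul_assoc] at this; exact this
      calc g⁻¹ * g⁻¹ = g⁻¹ * g⁻¹ * p * p⁻¹ := by group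
        _ = p * p⁻¹ := by rw [h3]
        _ = 1 := by group
    have h4 : g * g = 1 := by
      have := congrArg (fun z => z⁻¹) h2
      simpa [mul_inv_rev] using this
    have h5 : orderOf g ∣ 2 := orderOf_dvd_of_pow_eq_one (by rw [pow_two]; exact h4)
    rw [hgc.orderOf] at h5
    rcases (Nat.dvd_prime Nat.prime_two).mp h5 with h6 | h6
    · exact g.card_support_ne_one h6
    · rw [hgdef] at h6
      rw [h6] at hodd
      simp [Nat.odd_iff] at hodd
  exact ⟨hset, by rw [hrq]; exact hinvol, by rw [hrq]; exact hne,
    ⟨g⁻¹, by rw [hrq]; exact hginv, by rwa [Equiv.Perm.support_inv]⟩, hgmem, hgc⟩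


lemma cancel_term {R : Type*} [CommRing R] {n : ℕ} (A : Matrix (Fin n) (Fin n) R)
    (hskew : ∀ i j, A j i = -A i j) (p : Equiv.Perm (Fin n)) (x0 : Fin n)
    (hoddc : Odd (p.cycleOf x0).support.card) :
    ((Equiv.Perm.sign p : ℤ) : R) * ∏ i, A i (p i)
      = -(((Equiv.Perm.sign (revAt p x0) : ℤ) : R) * ∏ i, A i (revAt p x0 i)) := by
  obtain ⟨hset, hinvol, hne, hmem, hgmem, hgc⟩ := rev_core p x0 hoddc
  obtain ⟨hd, _, _⟩ := rev_lemma hgmem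
  have hpe : p = p.cycleOf x0 * ((p.cycleOf x0)⁻¹ * p) := by group
  have hk := key_lemma A hskew (p.cycleOf x0) ((p.cycleOf x0)⁻¹ * p) hgc hoddc hd
  rw [← hpe] at hk
  exact hk

/-- For a skew-symmetric matrix `A` and a permutation `π` containing an odd cycle `σ`
(so `π = σ * τ` with `σ, τ` disjoint, `σ` a cycle of odd length), letting `π'` be obtained
from `π` by reversing `σ` (i.e. `π' = σ⁻¹ * τ`), the signed Leibniz terms of `π` and `π'`
are negatives of each other; consequently, the contributions of all permutations containing
an odd cycle to `det A` cancel out (their total sum is zero). -/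
theorem stmt_4 {R : Type*} [CommRing R] (n : ℕ) (A : Matrix (Fin n) (Fin n) R)
    (hskew : ∀ i j, A j i = -A i j) (hdiag : ∀ i, A i i = 0)
    (π π' σ τ : Equiv.Perm (Fin n)) (hcyc : σ.IsCycle) (hodd : Odd σ.support.card)
    (hdisj : σ.Disjoint τ) (hπ : π = σ * τ) (hπ' : π' = σ⁻¹ * τ) :
    ((Equiv.Perm.sign π : ℤ) : R) * ∏ i, A i (π i)
      = -(((Equiv.Perm.sign π' : ℤ) : R) * ∏ i, A i (π' i)) ∧
    ∑ p ∈ Finset.univ.filter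
        (fun p : Equiv.Perm (Fin n) => ∃ g ∈ p.cycleFactorsFinset, Odd g.support.card),
      ((Equiv.Perm.sign p : ℤ) : R) * ∏ i, A i (p i) = 0 := by
  constructor
  · subst hπ hπ'
    exact key_lemma A hskew σ τ hcyc hodd hdisj
  · refine Finset.sum_involution
      (fun p hp => revAt p ((oddSet p).min' (oddSet_nonempty (Finset.mem_filter.mp hp).2)))
      ?_ ?_ ?_ ?_
    · intro p hp
      beta_reduce
      set x0 := (oddSet p).min' (oddSet_nonempty (Finset.mem_filter.mp hp).2) with hx0
      have hx0mem : x0 ∈ oddSet p := Finset.min'_mem _ _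
      have hoddc : Odd (p.cycleOf x0).support.card := (Finset.mem_filter.mp hx0mem).2
      rw [cancel_term A hskew p x0 hoddc]
      ring
    · intro p hp _
      beta_reduce
      set x0 := (oddSet p).min' (oddSet_nonempty (Finset.mem_filter.mp hp).2) with hx0
      have hx0mem : x0 ∈ oddSet p := Finset.min'_mem _ _
      have hoddc : Odd (p.cycleOf x0).support.card := (Finset.mem_filter.mp hx0mem).2
      exact (rev_core p x0 hoddc).2.2.1
    · intro p hp
      beta_reduce
      set x0 := (oddSet p).min' (oddSet_nonempty (Finset.mem_filter.mp hp).2) with hx0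
      have hx0mem : x0 ∈ oddSet p := Finset.min'_mem _ _
      have hoddc : Odd (p.cycleOf x0).support.card := (Finset.mem_filter.mp hx0mem).2
      exact Finset.mem_filter.mpr ⟨Finset.mem_univ _, (rev_core p x0 hoddc).2.2.2.1⟩
    · intro p hp
      beta_reduce
      set x0 := (oddSet p).min' (oddSet_nonempty (Finset.mem_filter.mp hp).2) with hx0
      have hx0mem : x0 ∈ oddSet p := Finset.min'_mem _ _
      have hoddc : Odd (p.cycleOf x0).support.card := (Finset.mem_filter.mp hx0mem).2
      obtain ⟨hset, hinvol, hne, hmem, hgmem, hgc⟩ := rev_core p x0 hoddc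
      have hmin : ∀ h, (oddSet (revAt p x0)).min' h = x0 := by
        intro h
        have h2 : (oddSet p).Nonempty := hset ▸ h
        have : (oddSet (revAt p x0)).min' h = (oddSet p).min' h2 := by
          congr 1
        rw [this, hx0]
      rw [hmin]
      exact hinvol
end

section
/- (Isolating Lemma) Let (S, F) be a set system where S has n elements and F is a nonempty family of subsets of S. Assign to each element of S an integer weight chosen uniformly and independently at random from {1, 2, ..., K}, and define the weight of a set in F as the sum of the weights of its elements. Then the probability that F contains a unique minimum-weight set is at least 1 − n/K. -/
open Finset
open scoped Classical

/-- `x` is ambiguous for weights `w`: there are minimum-weight sets `A ∋ x` and `B ∌ x`. -/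
private def amb {α : Type*} [DecidableEq α] (F : Finset (Finset α)) (x : α) (w : α → ℕ) : Prop :=
  ∃ A ∈ F, ∃ B ∈ F, x ∈ A ∧ x ∉ B ∧
    (∀ C ∈ F, ∑ y ∈ A, w y ≤ ∑ y ∈ C, w y) ∧
    (∀ C ∈ F, ∑ y ∈ B, w y ≤ ∑ y ∈ C, w y)

/-- If `x` is ambiguous for two weight functions agreeing off `x`, they agree at `x` too. -/
private lemma amb_det {α : Type*} [DecidableEq α] (F : Finset (Finset α)) (x : α)
    (w w' : α → ℕ) (hagree : ∀ y, y ≠ x → w y = w' y)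
    (h : amb F x w) (h' : amb F x w') : w x = w' x := by
  obtain ⟨A, hA, B, hB, hxA, hxB, hminA, hminB⟩ := h
  obtain ⟨A', hA', B', hB', hxA', hxB', hminA', hminB'⟩ := h'
  have trans : ∀ s : Finset α, x ∉ s → ∑ y ∈ s, w y = ∑ y ∈ s, w' y := fun s hs =>
    Finset.sum_congr rfl fun y hy => hagree y (fun hyx => hs (hyx ▸ hy))
  have eA : w x + ∑ y ∈ A.erase x, w y = ∑ y ∈ A, w y := Finset.add_sum_erase _ _ hxA
  have eA' : w x + ∑ y ∈ A'.erase x, w y = ∑ y ∈ A', w y := Finset.add_sum_erase _ _ hxA'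
  have eA2 : w' x + ∑ y ∈ A.erase x, w' y = ∑ y ∈ A, w' y := Finset.add_sum_erase _ _ hxA
  have eA2' : w' x + ∑ y ∈ A'.erase x, w' y = ∑ y ∈ A', w' y := Finset.add_sum_erase _ _ hxA'
  have tAe := trans (A.erase x) (Finset.notMem_erase x A)
  have tA'e := trans (A'.erase x) (Finset.notMem_erase x A')
  have tB := trans B hxB
  have tB' := trans B' hxB'
  have h1 := hminA A' hA'
  have h2 := hminA' A hA
  have h3 := hminB B' hB'
  have h4 := hminB' B hB
  have h5a := hminA B hB
  have h5b := hminB A hA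
  have h5a' := hminA' B' hB'
  have h5b' := hminB' A' hA'
  omega

/-- Isolating Lemma: for a set system `(S, F)` with `|S| = n` and `F` nonempty, if each
element of `S` receives a weight chosen uniformly and independently from `{1, …, K}`, then
with probability at least `1 − n/K` there is a unique minimum-weight set in `F`. -/
theorem stmt_8 {α : Type*} [Fintype α] [DecidableEq α]
    (F : Finset (Finset α)) (hF : F.Nonempty) (K : ℕ) (hK : 0 < K) :
    (1 : ℚ) - (Fintype.card α : ℚ) / K ≤
      (((Fintype.piFinset fun _ : α => Finset.Icc 1 K).filter
          (fun (w : α → ℕ) =>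
            ∃! A, A ∈ F ∧ ∀ B ∈ F, ∑ x ∈ A, w x ≤ ∑ x ∈ B, w x)).card : ℚ)
        / (K ^ Fintype.card α : ℚ) := by
  set n := Fintype.card α with hn
  set Ω := Fintype.piFinset fun _ : α => Finset.Icc 1 K with hΩ
  have hΩcard : Ω.card = K ^ n := by
    rw [hΩ, Fintype.card_piFinset]
    simp [Nat.card_Icc, hn]
  -- bound for each per-element bad set
  have hbadx : ∀ x : α, (Ω.filter (amb F x)).card * K ≤ K ^ n := by
    intro x
    have hmap : ∀ p ∈ (Ω.filter (amb F x)) ×ˢ Finset.Icc 1 K,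
        Function.update p.1 x p.2 ∈ Ω := by
      intro p hp
      rw [Finset.mem_product] at hp
      obtain ⟨hp1, hp2⟩ := hp
      rw [Finset.mem_filter] at hp1
      rw [hΩ, Fintype.mem_piFinset]
      intro y
      by_cases hyx : y = x
      · subst hyx; simpa using hp2
      · rw [Function.update_of_ne hyx]
        have h1 := hp1.1
        rw [hΩ, Fintype.mem_piFinset] at h1
        exact h1 y
    have hinj : Set.InjOn (fun p : (α → ℕ) × ℕ => Function.update p.1 x p.2)
        ((((Ω.filter (amb F x)) ×ˢ Finset.Icc 1 K : Finset _)) : Set ((α → ℕ) × ℕ)) := by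
      intro p hp q hq heq
      simp only [Finset.mem_coe, Finset.mem_product, Finset.mem_filter] at hp hq
      have hx2 : p.2 = q.2 := by
        have := congrFun heq x
        simpa using this
      have hoff : ∀ y, y ≠ x → p.1 y = q.1 y := by
        intro y hy
        have := congrFun heq y
        simpa [Function.update_of_ne hy] using this
      have hxx : p.1 x = q.1 x := amb_det F x p.1 q.1 hoff hp.1.2 hq.1.2
      have h1 : p.1 = q.1 := funext fun y => by
        by_cases hyx : y = x
        · subst hyx; exact hxx
        · exact hoff y hyx
      exact Prod.ext h1 hx2
    have hcard := Finset.card_le_card_of_injOn _ hmap hinj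
    rw [Finset.card_product, Nat.card_Icc] at hcard
    simpa [hΩcard] using hcard
  -- the bad event is covered by the per-element bad sets
  have hcov : Ω.filter (fun w => ¬ (∃! A, A ∈ F ∧ ∀ B ∈ F, ∑ x ∈ A, w x ≤ ∑ x ∈ B, w x))
      ⊆ Finset.univ.biUnion (fun x => Ω.filter (amb F x)) := by
    intro w hw
    rw [Finset.mem_filter] at hw
    obtain ⟨hwΩ, hnot⟩ := hw
    obtain ⟨A, hA, hminA⟩ := F.exists_min_image (fun A => ∑ y ∈ A, w y) hF
    have hex : ∃ B, (B ∈ F ∧ ∀ C ∈ F, ∑ y ∈ B, w y ≤ ∑ y ∈ C, w y) ∧ B ≠ A := by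
      by_contra hc
      push_neg at hc
      exact hnot ⟨A, ⟨hA, hminA⟩, fun B hB => hc B hB⟩
    obtain ⟨B, ⟨hB, hminB⟩, hBA⟩ := hex
    have hx : ∃ x, (x ∈ A ∧ x ∉ B) ∨ (x ∈ B ∧ x ∉ A) := by
      by_contra hc
      push_neg at hc
      exact hBA (Finset.ext fun y => ⟨(hc y).2, (hc y).1⟩)
    obtain ⟨x, hx⟩ := hx
    rw [Finset.mem_biUnion]
    refine ⟨x, Finset.mem_univ x, Finset.mem_filter.mpr ⟨hwΩ, ?_⟩⟩
    rcases hx with ⟨hxA, hxB⟩ | ⟨hxB, hxA⟩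
    · exact ⟨A, hA, B, hB, hxA, hxB, hminA, hminB⟩
    · exact ⟨B, hB, A, hA, hxB, hxA, hminB, hminA⟩
  -- counting the bad event
  have hbad : (Ω.filter (fun w =>
      ¬ (∃! A, A ∈ F ∧ ∀ B ∈ F, ∑ x ∈ A, w x ≤ ∑ x ∈ B, w x))).card * K ≤ n * K ^ n := by
    calc (Ω.filter (fun w =>
          ¬ (∃! A, A ∈ F ∧ ∀ B ∈ F, ∑ x ∈ A, w x ≤ ∑ x ∈ B, w x))).card * K
        ≤ (Finset.univ.biUnion fun x => Ω.filter (amb F x)).card * K :=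
          Nat.mul_le_mul_right K (Finset.card_le_card hcov)
      _ ≤ (∑ x : α, (Ω.filter (amb F x)).card) * K :=
          Nat.mul_le_mul_right K Finset.card_biUnion_le
      _ = ∑ x : α, (Ω.filter (amb F x)).card * K := by rw [Finset.sum_mul]
      _ ≤ ∑ _x : α, K ^ n := Finset.sum_le_sum fun x _ => hbadx x
      _ = n * K ^ n := by
          rw [Finset.sum_const, Finset.card_univ, smul_eq_mul, ← hn]
  -- split Ω into good and bad
  have hsplit := Finset.card_filter_add_card_filter_not (s := Ω)
      (p := fun w => ∃! A, A ∈ F ∧ ∀ B ∈ F, ∑ x ∈ A, w x ≤ ∑ x ∈ B, w x)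
  set G := (Ω.filter (fun w =>
      ∃! A, A ∈ F ∧ ∀ B ∈ F, ∑ x ∈ A, w x ≤ ∑ x ∈ B, w x)).card with hG
  set b := (Ω.filter (fun w =>
      ¬ (∃! A, A ∈ F ∧ ∀ B ∈ F, ∑ x ∈ A, w x ≤ ∑ x ∈ B, w x))).card with hb
  -- rational arithmetic
  have hKQ : (0:ℚ) < K := by exact_mod_cast hK
  have hpow : (0:ℚ) < (K:ℚ) ^ n := by positivity
  have hGb : (G:ℚ) + b = (K:ℚ) ^ n := by
    have : G + b = K ^ n := by rw [← hΩcard]; exact hsplit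
    exact_mod_cast this
  have hbQ : (b:ℚ) ≤ (n:ℚ) / K * (K:ℚ) ^ n := by
    rw [div_mul_eq_mul_div, le_div_iff₀ hKQ]
    exact_mod_cast hbad
  rw [le_div_iff₀ hpow]
  have hring : ((1:ℚ) - (n:ℚ) / K) * (K:ℚ) ^ n = (K:ℚ) ^ n - (n:ℚ) / K * (K:ℚ) ^ n := by
    ring
  rw [hring]
  linarith
end

section
/- Let π be a permutation of the vertex set of a graph G consisting solely of even cycles such that for every i, there is an edge between i and π(i). Then G has a perfect matching; moreover, from each even cycle one can extract the alternate-edge matching of smaller total weight, so if the product term of π contributes 2^{2W'} then G has a perfect matching of weight at most W'. -/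
open Finset

namespace Stmt10Aux

variable {n : ℕ}

lemma perm_apply_inv_self {α : Type*} (π : Equiv.Perm α) (x : α) : π (π⁻¹ x) = x :=
  π.apply_symm_apply x

lemma perm_inv_apply_self {α : Type*} (π : Equiv.Perm α) (x : α) : π⁻¹ (π x) = x :=
  π.symm_apply_apply x

noncomputable def repv (π : Equiv.Perm (Fin n)) (v : Fin n) : Fin n :=
  (Finset.univ.filter fun u => π.SameCycle v u).min'
    ⟨v, by simp [Equiv.Perm.SameCycle.refl]⟩

lemma sc_repv (π : Equiv.Perm (Fin n)) (v : Fin n) : π.SameCycle v (repv π v) := by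
  have := Finset.min'_mem (Finset.univ.filter fun u => π.SameCycle v u)
    ⟨v, by simp [Equiv.Perm.SameCycle.refl]⟩
  simpa [repv] using this

lemma repv_congr {π : Equiv.Perm (Fin n)} {v u : Fin n} (h : π.SameCycle v u) :
    repv π v = repv π u := by
  unfold repv
  congr 1
  ext x
  simp only [Finset.mem_filter, Finset.mem_univ, true_and]
  exact ⟨fun hx => h.symm.trans hx, fun hx => h.trans hx⟩

lemma repv_apply (π : Equiv.Perm (Fin n)) (v : Fin n) : repv π (π v) = repv π v :=
  (repv_congr ((Equiv.Perm.sameCycle_apply_right).mpr (Equiv.Perm.SameCycle.refl π v))).symm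

lemma repv_apply_inv (π : Equiv.Perm (Fin n)) (v : Fin n) : repv π (π⁻¹ v) = repv π v := by
  have := repv_apply π (π⁻¹ v)
  rw [perm_apply_inv_self] at this
  exact this.symm

lemma existsk (π : Equiv.Perm (Fin n)) (v : Fin n) : ∃ m : ℕ, (π ^ m) (repv π v) = v := by
  obtain ⟨i, _, hi⟩ := (sc_repv π v).symm.exists_pow_eq'
  exact ⟨i, hi⟩

noncomputable def kv (π : Equiv.Perm (Fin n)) (v : Fin n) : ℕ := Nat.find (existsk π v)

lemma kv_spec (π : Equiv.Perm (Fin n)) (v : Fin n) : (π ^ kv π v) (repv π v) = v :=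
  Nat.find_spec (existsk π v)

lemma kv_min (π : Equiv.Perm (Fin n)) (v : Fin n) {m : ℕ} (h : m < kv π v) :
    (π ^ m) (repv π v) ≠ v :=
  Nat.find_min (existsk π v) h

lemma kv_eq_zero_iff (π : Equiv.Perm (Fin n)) (v : Fin n) :
    kv π v = 0 ↔ repv π v = v := by
  unfold kv
  rw [Nat.find_eq_zero]
  simp

lemma kv_apply (π : Equiv.Perm (Fin n)) (v : Fin n) (h : π v ≠ repv π v) :
    kv π (π v) = kv π v + 1 := by
  have : kv π (π v) = Nat.find (existsk π (π v)) := rfl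
  rw [this, Nat.find_eq_iff]
  constructor
  · show (π ^ (kv π v + 1)) (repv π (π v)) = π v
    rw [repv_apply, pow_succ', Equiv.Perm.mul_apply, kv_spec]
  · intro j hj
    show ¬ (π ^ j) (repv π (π v)) = π v
    rw [repv_apply]
    rcases j with _ | i
    · simp only [pow_zero, Equiv.Perm.one_apply]
      exact fun hh => h hh.symm
    · intro hh
      rw [pow_succ', Equiv.Perm.mul_apply] at hh
      have hv : (π ^ i) (repv π v) = v := π.injective hh
      exact kv_min π v (by omega) hv

lemma kv_apply_inv (π : Equiv.Perm (Fin n)) (v : Fin n) (h : v ≠ repv π v) :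
    kv π v = kv π (π⁻¹ v) + 1 := by
  have h2 : π (π⁻¹ v) ≠ repv π (π⁻¹ v) := by
    rw [perm_apply_inv_self, repv_apply_inv]; exact h
  have := kv_apply π (π⁻¹ v) h2
  rw [perm_apply_inv_self] at this
  exact this

lemma kv_odd (π : Equiv.Perm (Fin n)) (hfix : ∀ i, π i ≠ i)
    (heven : ∀ σ ∈ π.cycleFactorsFinset, Even σ.support.card)
    (v : Fin n) (h : π v = repv π v) : Odd (kv π v) := by
  set r := repv π v with hr
  set m := kv π v with hm
  set L := (π.cycleOf r).support.card with hL
  have hrs : r ∈ π.support := Equiv.Perm.mem_support.2 (hfix r)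
  have hrmem : r ∈ (π.cycleOf r).support :=
    Equiv.Perm.mem_support_cycleOf_iff.mpr ⟨Equiv.Perm.SameCycle.refl π r, hrs⟩
  have hLe : Even L :=
    heven _ (Equiv.Perm.cycleOf_mem_cycleFactorsFinset_iff.mpr hrs)
  have hcyc := π.isCycleOn_support_cycleOf r
  have hret : (π ^ (m + 1)) r = r := by
    rw [pow_succ', Equiv.Perm.mul_apply]
    have h1 : (π ^ m) r = v := kv_spec π v
    rw [h1]; exact h
  have hdvd : L ∣ (m + 1) := (hcyc.pow_apply_eq hrmem).mp hret
  have hLpos : 0 < L := Finset.card_pos.mpr ⟨r, hrmem⟩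
  have hmlt : m < L := by
    by_contra hge
    push_neg at hge
    have hmod : (π ^ (m % L)) r = v := by
      rw [← hL] at *
      rw [Equiv.Perm.pow_mod_card_support_cycleOf_self_apply]
      exact kv_spec π v
    exact kv_min π v (by have := Nat.mod_lt m hLpos; omega) hmod
  have hml : m + 1 = L := Nat.le_antisymm (by omega) (Nat.le_of_dvd (Nat.succ_pos m) hdvd)
  rcases hLe with ⟨t, ht⟩
  exact ⟨t - 1, by omega⟩

noncomputable def S0 (π : Equiv.Perm (Fin n)) (w : Fin n → Fin n → ℕ) (r : Fin n) : ℕ :=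
  ∑ v ∈ Finset.univ.filter (fun v => repv π v = r ∧ Even (kv π v)), w v (π v)

noncomputable def S1 (π : Equiv.Perm (Fin n)) (w : Fin n → Fin n → ℕ) (r : Fin n) : ℕ :=
  ∑ v ∈ Finset.univ.filter (fun v => repv π v = r ∧ ¬ Even (kv π v)), w v (π v)

noncomputable def cbit (π : Equiv.Perm (Fin n)) (w : Fin n → Fin n → ℕ) (v : Fin n) : ℕ :=
  if S1 π w (repv π v) < S0 π w (repv π v) then 1 else 0

lemma cbit_apply (π : Equiv.Perm (Fin n)) (w : Fin n → Fin n → ℕ) (v : Fin n) :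
    cbit π w (π v) = cbit π w v := by
  unfold cbit; rw [repv_apply]

lemma P_iff (π : Equiv.Perm (Fin n)) (w : Fin n → Fin n → ℕ) {v r : Fin n}
    (hr : repv π v = r) :
    Even (kv π v + cbit π w v) ↔
      (if S1 π w r < S0 π w r then ¬ Even (kv π v) else Even (kv π v)) := by
  unfold cbit
  rw [hr]
  split_ifs with hc
  · simp [Nat.even_add_one]
  · simp

lemma flip (π : Equiv.Perm (Fin n)) (hfix : ∀ i, π i ≠ i)
    (heven : ∀ σ ∈ π.cycleFactorsFinset, Even σ.support.card)
    (w : Fin n → Fin n → ℕ) (v : Fin n) :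
    Even (kv π (π v) + cbit π w (π v)) ↔ ¬ Even (kv π v + cbit π w v) := by
  rw [cbit_apply]
  by_cases h : π v = repv π v
  · have h0 : kv π (π v) = 0 := (kv_eq_zero_iff π (π v)).mpr (by rw [repv_apply]; exact h.symm)
    have hodd : Odd (kv π v) := kv_odd π hfix heven v h
    rcases hodd with ⟨t, ht⟩
    rw [h0, Nat.even_iff, Nat.even_iff, ht]
    omega
  · rw [kv_apply π v h, Nat.even_iff, Nat.even_iff]
    omega

end Stmt10Aux

open Stmt10Aux

/-- If `π` is a permutation of the vertices of `G` consisting solely of even cycles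
(no fixed points, every cycle of even length) with `i` adjacent to `π i` for all `i`, then
`G` has a perfect matching (a fixed-point-free involution `μ` along edges), obtained by
taking from each cycle the alternate-edge matching of smaller total weight; in particular
its weight is at most that of `π`, i.e. `Σ_v w(v, μ v) ≤ Σ_v w(v, π v)` (both sums count
each edge twice, so this says the matching has weight at most `W'`). -/
theorem stmt_10 {n : ℕ} (G : SimpleGraph (Fin n)) (w : Fin n → Fin n → ℕ)
    (hw : ∀ u v, w u v = w v u)
    (π : Equiv.Perm (Fin n))
    (hfix : ∀ i, π i ≠ i)
    (heven : ∀ σ ∈ π.cycleFactorsFinset, Even σ.support.card)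
    (hadj : ∀ i, G.Adj i (π i)) :
    ∃ μ : Equiv.Perm (Fin n),
      (∀ v, μ (μ v) = v) ∧ (∀ v, μ v ≠ v) ∧ (∀ v, G.Adj v (μ v)) ∧
      ∑ v : Fin n, w v (μ v) ≤ ∑ v : Fin n, w v (π v) := by
  set P : Fin n → Prop := fun v => Even (kv π v + cbit π w v) with hP
  have hflip : ∀ v, P (π v) ↔ ¬ P v := fun v => flip π hfix heven w v
  have hflipinv : ∀ v, ¬ P v → P (π⁻¹ v) := by
    intro v hv
    by_contra hc
    have := (hflip (π⁻¹ v)).mpr hc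
    rw [perm_apply_inv_self] at this
    exact hv this
  set μf : Fin n → Fin n := fun v => if P v then π v else π⁻¹ v with hμf
  have hinv : Function.Involutive μf := by
    intro v
    by_cases hv : P v
    · have h1 : ¬ P (π v) := by rw [hflip]; exact fun hc => hc hv
      simp only [hμf, if_pos hv, if_neg h1, perm_inv_apply_self]
    · have h2 : P (π⁻¹ v) := hflipinv v hv
      simp only [hμf, if_neg hv, if_pos h2, perm_apply_inv_self]
  refine ⟨Function.Involutive.toPerm μf hinv, hinv, ?_, ?_, ?_⟩
  · intro v
    show μf v ≠ v
    by_cases hv : P v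
    · simpa [hμf, if_pos hv] using hfix v
    · simp only [hμf, if_neg hv]
      intro hh
      apply hfix v
      have := congrArg π hh
      rw [perm_apply_inv_self] at this
      exact this.symm
  · intro v
    show G.Adj v (μf v)
    by_cases hv : P v
    · simpa [hμf, if_pos hv] using hadj v
    · simp only [hμf, if_neg hv]
      have := hadj (π⁻¹ v)
      rw [perm_apply_inv_self] at this
      exact this.symm
  · show ∑ v : Fin n, w v (μf v) ≤ ∑ v : Fin n, w v (π v)
    have hsplit1 : ∑ v : Fin n, w v (μf v) =
        (∑ v ∈ Finset.univ.filter P, w v (π v)) +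
        (∑ v ∈ Finset.univ.filter (fun v => ¬ P v), w v (π⁻¹ v)) := by
      have e1 : ∑ v ∈ Finset.univ.filter P, w v (μf v) =
          ∑ v ∈ Finset.univ.filter P, w v (π v) :=
        Finset.sum_congr rfl fun v hv => by
          rw [hμf]; simp [(Finset.mem_filter.mp hv).2]
      have e2 : ∑ v ∈ Finset.univ.filter (fun v => ¬ P v), w v (μf v) =
          ∑ v ∈ Finset.univ.filter (fun v => ¬ P v), w v (π⁻¹ v) :=
        Finset.sum_congr rfl fun v hv => by
          rw [hμf]; simp [(Finset.mem_filter.mp hv).2]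
      rw [← e1, ← e2, Finset.sum_filter_add_sum_filter_not]
    have hBA : ∑ v ∈ Finset.univ.filter (fun v => ¬ P v), w v (π⁻¹ v) =
        ∑ v ∈ Finset.univ.filter P, w v (π v) := by
      refine Finset.sum_bij' (fun v _ => π⁻¹ v) (fun v _ => π v) ?_ ?_ ?_ ?_ ?_
      · intro v hv
        simp only [Finset.mem_filter, Finset.mem_univ, true_and] at hv ⊢
        exact hflipinv v hv
      · intro v hv
        simp only [Finset.mem_filter, Finset.mem_univ, true_and] at hv ⊢
        rw [hflip]
        exact fun hc => hc hv
      · intro v _; exact perm_apply_inv_self π v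
      · intro v _; exact perm_inv_apply_self π v
      · intro v _
        rw [hw, perm_apply_inv_self]
    have hsplit2 : ∑ v : Fin n, w v (π v) =
        (∑ v ∈ Finset.univ.filter P, w v (π v)) +
        (∑ v ∈ Finset.univ.filter (fun v => ¬ P v), w v (π v)) :=
      (Finset.sum_filter_add_sum_filter_not Finset.univ P _).symm
    have hcore : ∑ v ∈ Finset.univ.filter P, w v (π v) ≤
        ∑ v ∈ Finset.univ.filter (fun v => ¬ P v), w v (π v) := by
      rw [← Finset.sum_fiberwise (Finset.univ.filter P) (repv π) (fun v => w v (π v)),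
        ← Finset.sum_fiberwise (Finset.univ.filter (fun v => ¬ P v)) (repv π)
          (fun v => w v (π v))]
      refine Finset.sum_le_sum fun r _ => ?_
      by_cases hc : S1 π w r < S0 π w r
      · have e1 : (Finset.univ.filter P).filter (fun v => repv π v = r) =
            Finset.univ.filter (fun v => repv π v = r ∧ ¬ Even (kv π v)) := by
          ext v
          simp only [Finset.mem_filter, Finset.mem_univ, true_and, hP]
          constructor
          · rintro ⟨hp, hrr⟩
            have hq := (P_iff π w hrr).mp hp
            rw [if_pos hc] at hq
            exact ⟨hrr, hq⟩
          · rintro ⟨hrr, hk⟩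
            exact ⟨(P_iff π w hrr).mpr (by rw [if_pos hc]; exact hk), hrr⟩
        have e2 : (Finset.univ.filter (fun v => ¬ P v)).filter (fun v => repv π v = r) =
            Finset.univ.filter (fun v => repv π v = r ∧ Even (kv π v)) := by
          ext v
          simp only [Finset.mem_filter, Finset.mem_univ, true_and, hP]
          constructor
          · rintro ⟨hp, hrr⟩
            have hq := P_iff π w (v := v) hrr
            rw [if_pos hc] at hq
            refine ⟨hrr, ?_⟩
            by_contra h
            exact hp (hq.mpr h)
          · rintro ⟨hrr, hk⟩
            have hq := P_iff π w (v := v) hrr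
            rw [if_pos hc] at hq
            exact ⟨fun hp => (hq.mp hp) hk, hrr⟩
        rw [e1, e2]
        exact le_of_lt hc
      · have e1 : (Finset.univ.filter P).filter (fun v => repv π v = r) =
            Finset.univ.filter (fun v => repv π v = r ∧ Even (kv π v)) := by
          ext v
          simp only [Finset.mem_filter, Finset.mem_univ, true_and, hP]
          constructor
          · rintro ⟨hp, hrr⟩
            have hq := (P_iff π w hrr).mp hp
            rw [if_neg hc] at hq
            exact ⟨hrr, hq⟩
          · rintro ⟨hrr, hk⟩
            exact ⟨(P_iff π w hrr).mpr (by rw [if_neg hc]; exact hk), hrr⟩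
        have e2 : (Finset.univ.filter (fun v => ¬ P v)).filter (fun v => repv π v = r) =
            Finset.univ.filter (fun v => repv π v = r ∧ ¬ Even (kv π v)) := by
          ext v
          simp only [Finset.mem_filter, Finset.mem_univ, true_and, hP]
          constructor
          · rintro ⟨hp, hrr⟩
            have hq := P_iff π w (v := v) hrr
            rw [if_neg hc] at hq
            exact ⟨hrr, fun h => hp (hq.mpr h)⟩
          · rintro ⟨hrr, hk⟩
            have hq := P_iff π w (v := v) hrr
            rw [if_neg hc] at hq
            exact ⟨fun hp => hk (hq.mp hp), hrr⟩
        rw [e1, e2]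
        exact not_lt.mp hc
    omega
end

section
/- The 3-SAT-to-PM-VC-DD gadget reduction is correct: for a 3-CNF formula f = C_1 ∧ ... ∧ C_m over variable set X, construct for each clause C_i a gadget on 6 vertices (one clause vertex u_i, three literal vertices v_{i,1}, v_{i,2}, v_{i,3}, and two dummy vertices w_{i,1}, w_{i,2}), where u_i is joined to each v_{i,k} by a monochromatic edge colored red if literal l_{i,k} is positive and blue otherwise, and each pair (v_{i,k}, w_{i,j}) is joined by both a red monochromatic edge and a blue monochromatic edge. Then f is satisfiable if and only if the resulting graph has a perfect matching whose inherited vertex coloring assigns the same color to all literal vertices corresponding to the same variable. -/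
/-- The vertices of the clause gadgets: for each clause `i`, a clause vertex `u_i`
(`Sum.inl`), three literal vertices `v_{i,k}` (`Sum.inr ∘ Sum.inl`) and two dummy vertices
`w_{i,j}` (`Sum.inr ∘ Sum.inr`). -/
abbrev GadgetV (m : ℕ) := Fin m × (Unit ⊕ Fin 3 ⊕ Fin 2)

/-- The 3-SAT gadget graph on bi-colored edges, with colors `Bool` (`true` = red,
`false` = blue): within each clause `i`, the clause vertex `u_i` is joined to each literal
vertex `v_{i,k}` by a monochromatic edge that is red iff the literal `l_{i,k}` is positive,
and each pair `(v_{i,k}, w_{i,j})` is joined by a red and a blue monochromatic edge.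
`f i k = (x, b)` means the `k`-th literal of clause `i` is the variable `x`, positive iff
`b = true`. -/
def gadgetCol {m : ℕ} {X : Type*} (f : Fin m → Fin 3 → X × Bool) :
    GadgetV m → GadgetV m → Finset (Bool × Bool)
  | (i, Sum.inl _), (i', Sum.inr (Sum.inl k)) =>
      if i = i' then {((f i' k).2, (f i' k).2)} else ∅
  | (i, Sum.inr (Sum.inl k)), (i', Sum.inl _) =>
      if i = i' then {((f i k).2, (f i k).2)} else ∅
  | (i, Sum.inr (Sum.inl _)), (i', Sum.inr (Sum.inr _)) =>
      if i = i' then {(true, true), (false, false)} else ∅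
  | (i, Sum.inr (Sum.inr _)), (i', Sum.inr (Sum.inl _)) =>
      if i = i' then {(true, true), (false, false)} else ∅
  | _, _ => ∅

/-- Perfect matching (fixed-point-free involution along edges) of a bi-colored graph given
by its color-pair function, with inherited vertex coloring `c`. -/
def IsPM {V : Type*} (col : V → V → Finset (Bool × Bool))
    (π : Equiv.Perm V) (c : V → Bool) : Prop :=
  (∀ x, π (π x) = x) ∧ (∀ x, π x ≠ x) ∧ ∀ x, (c x, c (π x)) ∈ col x (π x)

/-- Literal matched to dummy `d` when the chosen literal is `k`. -/
def gd : Fin 3 → Fin 2 → Fin 3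
  | 0, 0 => 1 | 0, 1 => 2
  | 1, 0 => 0 | 1, 1 => 2
  | 2, 0 => 0 | 2, 1 => 1

/-- The within-clause matching when the chosen literal is `k`. -/
def g (k : Fin 3) : Unit ⊕ Fin 3 ⊕ Fin 2 → Unit ⊕ Fin 3 ⊕ Fin 2
  | Sum.inl _ => Sum.inr (Sum.inl k)
  | Sum.inr (Sum.inl j) =>
      if j = k then Sum.inl ()
      else Sum.inr (Sum.inr (if j = gd k 0 then 0 else 1))
  | Sum.inr (Sum.inr d) => Sum.inr (Sum.inl (gd k d))

lemma g_invol : ∀ (k : Fin 3) a, g k (g k a) = a := by decide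

lemma g_ne : ∀ (k : Fin 3) a, g k a ≠ a := by decide

lemma gd_eq : ∀ (k j : Fin 3), j ≠ k → gd k (if j = gd k 0 then 0 else 1) = j := by decide

/-- Correctness of the 3-SAT-to-PM-VC-DD reduction: the 3-CNF formula `f` is satisfiable iff
the gadget graph has a perfect matching whose inherited coloring gives the same color to all
literal vertices corresponding to the same variable. -/
theorem stmt_17 (m : ℕ) (X : Type*) (f : Fin m → Fin 3 → X × Bool) :
    (∃ s : X → Bool, ∀ i : Fin m, ∃ k : Fin 3, s (f i k).1 = (f i k).2) ↔
      ∃ (π : Equiv.Perm (GadgetV m)) (c : GadgetV m → Bool),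
        IsPM (gadgetCol f) π c ∧
        ∀ (i i' : Fin m) (k k' : Fin 3), (f i k).1 = (f i' k').1 →
          c (i, Sum.inr (Sum.inl k)) = c (i', Sum.inr (Sum.inl k')) := by
  classical
  constructor
  · rintro ⟨s, hs⟩
    choose K hK using hs
    have hinv : Function.Involutive
        (fun x : GadgetV m => (x.1, g (K x.1) x.2)) := by
      intro x; simp [g_invol]
    refine ⟨hinv.toPerm _, fun x =>
      match x with
      | (i, Sum.inl _) => (f i (K i)).2
      | (i, Sum.inr (Sum.inl j)) => s (f i j).1
      | (i, Sum.inr (Sum.inr d)) => s (f i (gd (K i) d)).1, ⟨hinv, ?_, ?_⟩, ?_⟩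
    · intro x
      simp only [Function.Involutive.coe_toPerm]
      intro h
      exact g_ne (K x.1) x.2 (congrArg Prod.snd h)
    · rintro ⟨i, a⟩
      simp only [Function.Involutive.coe_toPerm]
      match a with
      | Sum.inl _ =>
          simp [g, gadgetCol, hK i]
      | Sum.inr (Sum.inl j) =>
          by_cases hj : j = K i
          · subst hj
            simp [g, gadgetCol, hK i]
          · have := gd_eq (K i) j hj
            simp only [g, if_neg hj]
            simp only [gadgetCol, if_pos rfl, this]
            cases s (f i j).1 <;> simp
      | Sum.inr (Sum.inr d) =>
          simp only [g]
          simp only [gadgetCol, if_pos rfl]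
          cases s (f i (gd (K i) d)).1 <;> simp
    · intro i i' k k' h
      simp only [h]
  · rintro ⟨π, c, ⟨_, _, hcol⟩, hcons⟩
    refine ⟨fun x => if h : ∃ p : Fin m × Fin 3, (f p.1 p.2).1 = x then
        c (h.choose.1, Sum.inr (Sum.inl h.choose.2)) else true, ?_⟩
    intro i
    have hu := hcol (i, Sum.inl ())
    rcases hp : π (i, Sum.inl ()) with ⟨i', a⟩
    rw [hp] at hu
    match a with
    | Sum.inl _ => simp [gadgetCol] at hu
    | Sum.inr (Sum.inr _) => simp [gadgetCol] at hu
    | Sum.inr (Sum.inl k) =>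
      by_cases hii : i = i'
      · subst hii
        simp [gadgetCol, Prod.ext_iff] at hu
        refine ⟨k, ?_⟩
        have hex : ∃ p : Fin m × Fin 3, (f p.1 p.2).1 = (f i k).1 := ⟨(i, k), rfl⟩
        beta_reduce
        rw [dif_pos hex]
        rw [hcons _ i _ k hex.choose_spec]
        exact hu.2
      · simp [gadgetCol, hii] at hu
end

section
/- Exact perfect matching (XPM) polynomially reduces to perfect matching under symmetric vertex-color constraints (PM-VC-Sym): given a graph G with edges colored red or blue (monochromatic bi-colored edges) and an integer k, G has a perfect matching containing exactly k red edges if and only if G has a perfect matching whose inherited vertex coloring contains exactly 2k red vertices. -/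
open Finset

lemma key_19 {n : ℕ} (G : SimpleGraph (Fin n)) (redE : Sym2 (Fin n) → Bool)
    (P : Finset (Sym2 (Fin n))) (c : Fin n → Bool)
    (hE : ∀ e ∈ P, e ∈ G.edgeSet)
    (hpm : ∀ v : Fin n, ∃! e, e ∈ P ∧ v ∈ e)
    (hc : ∀ v : Fin n, ∀ e ∈ P, v ∈ e → c v = redE e) :
    (Finset.univ.filter fun v => c v = true).card
      = 2 * (P.filter fun e => redE e = true).card := by
  have hset : (Finset.univ.filter fun v => c v = true)
      = (P.filter fun e => redE e = true).biUnion
          (fun e => Finset.univ.filter (· ∈ e)) := by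
    ext v
    simp only [mem_filter, mem_univ, true_and, mem_biUnion]
    constructor
    · intro hv
      obtain ⟨e, ⟨heP, hve⟩, _⟩ := hpm v
      exact ⟨e, ⟨heP, by rw [← hc v e heP hve]; exact hv⟩, hve⟩
    · rintro ⟨e, ⟨heP, hre⟩, hve⟩
      rw [hc v e heP hve]; exact hre
  rw [hset, card_biUnion]
  · rw [Finset.sum_congr rfl (fun e he => ?_), Finset.sum_const, smul_eq_mul, mul_comm]
    obtain ⟨heP, -⟩ := mem_filter.mp he
    have hedge := hE e heP
    induction e using Sym2.ind with
    | _ a b =>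
      have hab : a ≠ b := (G.mem_edgeSet.mp hedge).ne
      have : Finset.univ.filter (· ∈ s(a, b)) = {a, b} := by
        ext x; simp [Sym2.mem_iff]
      rw [this, card_pair hab]
  · intro e1 h1 e2 h2 hne
    simp only [disjoint_left, mem_filter, mem_univ, true_and]
    intro v hv1 hv2
    obtain ⟨e0, -, hu⟩ := hpm v
    exact hne ((hu e1 ⟨(mem_filter.mp h1).1, hv1⟩).trans
      (hu e2 ⟨(mem_filter.mp h2).1, hv2⟩).symm)

/-- XPM reduces to PM-VC-Sym: in a graph `G` whose edges are colored red (`redE e = true`)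
or blue (monochromatic bi-colored edges), there is a perfect matching with exactly `k` red
edges iff there is a perfect matching whose inherited vertex coloring (each vertex gets the
color of its matched edge) has exactly `2k` red vertices. -/
theorem stmt_19 (n k : ℕ) (G : SimpleGraph (Fin n)) (redE : Sym2 (Fin n) → Bool) :
    (∃ P : Finset (Sym2 (Fin n)),
        (∀ e ∈ P, e ∈ G.edgeSet) ∧ (∀ v : Fin n, ∃! e, e ∈ P ∧ v ∈ e) ∧
        (P.filter fun e => redE e = true).card = k) ↔
      ∃ (P : Finset (Sym2 (Fin n))) (c : Fin n → Bool),
        (∀ e ∈ P, e ∈ G.edgeSet) ∧ (∀ v : Fin n, ∃! e, e ∈ P ∧ v ∈ e) ∧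
        (∀ v : Fin n, ∀ e ∈ P, v ∈ e → c v = redE e) ∧
        (Finset.univ.filter fun v => c v = true).card = 2 * k := by
  constructor
  · rintro ⟨P, hE, hpm, hk⟩
    have hex : ∀ v : Fin n, ∃ e, e ∈ P ∧ v ∈ e := fun v => (hpm v).exists
    choose f hf1 hf2 using hex
    refine ⟨P, fun v => redE (f v), hE, hpm, ?_, ?_⟩
    · intro v e heP hve
      have : e = f v := ((hpm v).unique ⟨heP, hve⟩ ⟨hf1 v, hf2 v⟩)
      rw [this]
    · rw [key_19 G redE P _ hE hpm (fun v e heP hve => by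
        rw [(hpm v).unique ⟨hf1 v, hf2 v⟩ ⟨heP, hve⟩]), hk]
  · rintro ⟨P, c, hE, hpm, hc, h2k⟩
    refine ⟨P, hE, hpm, ?_⟩
    have := key_19 G redE P c hE hpm hc
    omega
end
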